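/- arXiv:2009.04716 — 5 statements merged into one kernel-verified Lean document; each statement's English description precedes it below -/
import Mathlib

section
/- Let L be a q²-linearized additive polynomial over F_{q²}-algebra k with L(λx)=λL(x) for λ∈F_{q²}. For δ ∈ k with δ^q + δ = 0 and β ∈ k with L(β) = 0, the maps (t,u) ↦ (t + δu, u) and (t,u) ↦ (t + β, u) preserve the polynomial g(t,u) = L(t)^q·L(u) + L(t)·L(u)^q + c'. -/
/-!
`L` is additive, being a combination of iterates of the Frobenius `x ↦ x ^ p`, and it commutes with
multiplication by `δ` because `δ ^ q = -δ` forces `δ ^ q ^ 2 = δ`. Hence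
`L (t + δ u) = L t + δ L u`, and expanding `g` the two new terms `δ ^ q L(u) ^ (q + 1)` and
`δ L(u) ^ (q + 1)` cancel because `δ ^ q + δ = 0`; translation by a root `β` of `L` does not
change `L t` at all.
-/

section Linearized

variable {R : Type*} [CommRing R]

def linearizedPoly (A : ℕ → R) (q n : ℕ) (x : R) : R :=
  (∑ i ∈ Finset.range n, A i * x ^ q ^ (2 * i)) + x ^ q ^ (2 * n)

theorem add_pow_pow_of_eq_char_pow {p q e : ℕ} [Fact p.Prime] [CharP R p] (hq : q = p ^ e)
    (m : ℕ) (x y : R) : (x + y) ^ q ^ m = x ^ q ^ m + y ^ q ^ m := by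
  rw [hq, ← pow_mul, add_pow_char_pow]

theorem linearizedPoly_add {p q e : ℕ} [Fact p.Prime] [CharP R p] (hq : q = p ^ e)
    (A : ℕ → R) (n : ℕ) (x y : R) :
    linearizedPoly A q n (x + y) = linearizedPoly A q n x + linearizedPoly A q n y := by
  simp only [linearizedPoly, add_pow_pow_of_eq_char_pow hq, mul_add, Finset.sum_add_distrib]
  ring

theorem pow_pow_two_mul_eq_self {q : ℕ} {c : R} (hc : c ^ q ^ 2 = c) (i : ℕ) :
    c ^ q ^ (2 * i) = c := by
  induction i with
  | zero => simp
  | succ i ih => rw [mul_add_one, pow_add, pow_mul, ih, hc]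

theorem linearizedPoly_mul_of_pow_sq_eq_self {q : ℕ} {c : R} (hc : c ^ q ^ 2 = c)
    (A : ℕ → R) (n : ℕ) (x : R) :
    linearizedPoly A q n (c * x) = c * linearizedPoly A q n x := by
  simp only [linearizedPoly, mul_pow, pow_pow_two_mul_eq_self hc, mul_add, Finset.mul_sum]
  congr 1
  exact Finset.sum_congr rfl fun i _ => mul_left_comm _ _ _

end Linearized

theorem pow_pow_two_eq_self_of_pow_add_self_eq_zero {R : Type*} [CommRing R] {p q e : ℕ}
    [Fact p.Prime] [CharP R p] (hq : q = p ^ e) {δ : R} (hδ : δ ^ q + δ = 0) :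
    δ ^ q ^ 2 = δ := by
  have hδq : δ ^ q = -δ := eq_neg_of_add_eq_zero_left hδ
  rw [sq, pow_mul, hδq, neg_pow, hδq, hq, neg_one_pow_char_pow]
  ring

theorem stmt4_general {k : Type*} [Field k] (p q n : ℕ) (hp : p.Prime)
    [CharP k p] (hq : ∃ e : ℕ, 0 < e ∧ q = p ^ e)
    (A : ℕ → k) (L : k → k)
    (hL : ∀ x : k, L x = (∑ i ∈ Finset.range n, A i * x ^ q ^ (2 * i)) + x ^ q ^ (2 * n))
    (c' : k) (δ β : k) (hδ : δ ^ q + δ = 0) (hβ : L β = 0) :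
    (∀ t u : k,
        L (t + δ * u) ^ q * L u + L (t + δ * u) * L u ^ q + c' =
          L t ^ q * L u + L t * L u ^ q + c') ∧
    (∀ t u : k,
        L (t + β) ^ q * L u + L (t + β) * L u ^ q + c' =
          L t ^ q * L u + L t * L u ^ q + c') := by
  obtain ⟨e, -, hqe⟩ := hq
  have : Fact p.Prime := ⟨hp⟩
  obtain rfl : L = linearizedPoly A q n := funext hL
  have hδ2 := pow_pow_two_eq_self_of_pow_add_self_eq_zero hqe hδ
  refine ⟨fun t u => ?_, fun t u => ?_⟩
  · have hfrob := add_pow_pow_of_eq_char_pow hqe 1 (linearizedPoly A q n t)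
      (δ * linearizedPoly A q n u)
    rw [pow_one, mul_pow] at hfrob
    rw [linearizedPoly_add hqe, linearizedPoly_mul_of_pow_sq_eq_self hδ2, hfrob]
    linear_combination (linearizedPoly A q n u ^ q * linearizedPoly A q n u) * hδ
  · rw [linearizedPoly_add hqe, hβ, add_zero]

/-- the maps (t,u) ↦ (t+δu, u) with δ^q+δ=0 and (t,u) ↦ (t+β, u)
with L(β)=0 preserve g(t,u) = L(t)^q L(u) + L(t) L(u)^q + c'. -/
theorem stmt4 {k : Type*} [Field k] [IsAlgClosed k] (p q n : ℕ) (hp : p.Prime)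
    [CharP k p] (hq : ∃ e : ℕ, 0 < e ∧ q = p ^ e)
    (A : ℕ → k) (hA0 : A 0 ≠ 0) (hA : ∀ i, A i ^ q ^ 2 = A i) (L : k → k)
    (hL : ∀ x : k, L x = (∑ i ∈ Finset.range n, A i * x ^ q ^ (2 * i)) + x ^ q ^ (2 * n))
    (c' : k) (hc' : c' ≠ 0) (δ β : k) (hδ : δ ^ q + δ = 0) (hβ : L β = 0) :
    (∀ t u : k,
        L (t + δ * u) ^ q * L u + L (t + δ * u) * L u ^ q + c' =
          L t ^ q * L u + L t * L u ^ q + c') ∧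
    (∀ t u : k,
        L (t + β) ^ q * L u + L (t + β) * L u ^ q + c' =
          L t ^ q * L u + L t * L u ^ q + c') :=
  stmt4_general p q n hp hq A L hL c' δ β hδ hβ
end

section
/- Let q be a prime power and let α, β ∈ F_{q²}^* with α^(q+1) + β^(q+1) = 1, λ ∈ F_{q²} with λ^(q+1) = 1, and δ, ε in the kernel of L, where L(x) = x + x^(q²) + ⋯ + x^(q^(2n)) (or more generally a q²-linearized polynomial over F_{q²} with nonzero linear term). Then the map (x,y) ↦ (α^q·x − λβ^q·y + δ, β·x + λα·y + ε) preserves the polynomial L(x)^(q+1) + L(y)^(q+1) + c. -/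
/-!
Since `q` is a power of the characteristic, `x ↦ x ^ q` is additive, so `L` is additive, and it
commutes with multiplication by every `a` with `a ^ q ^ 2 = a`. Hence `L` carries the affine map
to the linear map with matrix `M = [[α^q, -λβ^q], [β, λα]]` on `(L x, L y)`, the translations
disappearing because `L δ = L ε = 0`. The conditions on `α, β, λ` say that `M` is unitary for
the Hermitian form `X ^ (q + 1) + Y ^ (q + 1)`, whose conjugation is `X ↦ X ^ q`.
-/

open Finset

section Linearized

variable {R : Type*} [CommRing R]

def linearizedEval (r : ℕ) (A : ℕ → R) (n : ℕ) (x : R) : R :=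
  (∑ i ∈ range n, A i * x ^ r ^ i) + x ^ r ^ n

variable {r : ℕ} (A : ℕ → R) (n : ℕ)

theorem pow_pow_eq_self_of_pow_eq {a : R} (ha : a ^ r = a) (i : ℕ) : a ^ r ^ i = a := by
  induction i with
  | zero => simp
  | succ i ih => rw [pow_succ, pow_mul, ih, ha]

theorem linearizedEval_mul_of_pow_eq {a : R} (ha : a ^ r = a) (x : R) :
    linearizedEval r A n (a * x) = a * linearizedEval r A n x := by
  simp only [linearizedEval, mul_pow, pow_pow_eq_self_of_pow_eq ha, mul_add, mul_sum]
  congr 1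
  exact sum_congr rfl fun i _ => mul_left_comm _ _ _

variable {p e : ℕ} [ExpChar R p]

theorem linearizedEval_add (hr : r = p ^ e) (x y : R) :
    linearizedEval r A n (x + y) = linearizedEval r A n x + linearizedEval r A n y := by
  subst hr
  simp only [linearizedEval, ← pow_mul, add_pow_expChar_pow, mul_add, sum_add_distrib]
  ring

theorem linearizedEval_sub (hr : r = p ^ e) (x y : R) :
    linearizedEval r A n (x - y) = linearizedEval r A n x - linearizedEval r A n y := by
  subst hr
  simp only [linearizedEval, ← pow_mul, sub_pow_expChar_pow, mul_sub, sum_sub_distrib]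
  ring

end Linearized

theorem pow_succ_add_pow_succ_of_unitary {R : Type*} [CommRing R] {p e : ℕ} [ExpChar R p]
    {α β lam : R} (hα : α ^ (p ^ e) ^ 2 = α) (hβ : β ^ (p ^ e) ^ 2 = β)
    (hαβ : α ^ (p ^ e + 1) + β ^ (p ^ e + 1) = 1) (hlam : lam ^ (p ^ e + 1) = 1) (X Y : R) :
    (α ^ p ^ e * X - lam * β ^ p ^ e * Y) ^ (p ^ e + 1) + (β * X + lam * α * Y) ^ (p ^ e + 1) =
      X ^ (p ^ e + 1) + Y ^ (p ^ e + 1) := by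
  have hαq : (α ^ p ^ e) ^ p ^ e = α := by rw [← pow_mul, ← sq, hα]
  have hβq : (β ^ p ^ e) ^ p ^ e = β := by rw [← pow_mul, ← sq, hβ]
  simp only [pow_succ _ (p ^ e), sub_pow_expChar_pow, add_pow_expChar_pow, mul_pow, hαq, hβq]
    at hαβ hlam ⊢
  linear_combination (X ^ p ^ e * X + Y ^ p ^ e * Y * (lam ^ p ^ e * lam)) * hαβ +
    Y ^ p ^ e * Y * hlam

theorem stmt6_general {k : Type*} [Field k] (p q n : ℕ) (hp : p.Prime)
    [CharP k p] (hq : ∃ e : ℕ, 0 < e ∧ q = p ^ e)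
    (A : ℕ → k) (L : k → k)
    (hL : ∀ x : k, L x = (∑ i ∈ Finset.range n, A i * x ^ q ^ (2 * i)) + x ^ q ^ (2 * n))
    (c : k)
    (α β lam δ ε : k)
    (hα2 : α ^ q ^ 2 = α) (hβ2 : β ^ q ^ 2 = β)
    (hαβ : α ^ (q + 1) + β ^ (q + 1) = 1)
    (hlam : lam ^ (q + 1) = 1) (hlam2 : lam ^ q ^ 2 = lam)
    (hδ : L δ = 0) (hε : L ε = 0) :
    ∀ x y : k,
      L (α ^ q * x - lam * β ^ q * y + δ) ^ (q + 1) +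
          L (β * x + lam * α * y + ε) ^ (q + 1) + c =
        L x ^ (q + 1) + L y ^ (q + 1) + c := by
  have : Fact p.Prime := ⟨hp⟩
  obtain ⟨e, -, rfl⟩ := hq
  have hr : (p ^ e) ^ 2 = p ^ (e * 2) := (pow_mul p e 2).symm
  obtain rfl : L = linearizedEval ((p ^ e) ^ 2) A n :=
    funext fun x => by simp only [hL, linearizedEval, pow_mul]
  have frob_fixed {a : k} (ha : a ^ (p ^ e) ^ 2 = a) : (a ^ p ^ e) ^ (p ^ e) ^ 2 = a ^ p ^ e := by
    rw [pow_right_comm, ha]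
  intro x y
  rw [linearizedEval_add A n hr, linearizedEval_sub A n hr, linearizedEval_add A n hr,
    linearizedEval_add A n hr, hδ, hε,
    linearizedEval_mul_of_pow_eq A n (frob_fixed hα2),
    linearizedEval_mul_of_pow_eq A n (by rw [mul_pow, hlam2, frob_fixed hβ2]),
    linearizedEval_mul_of_pow_eq A n hβ2,
    linearizedEval_mul_of_pow_eq A n (by rw [mul_pow, hlam2, hα2]), add_zero, add_zero,
    pow_succ_add_pow_succ_of_unitary hα2 hβ2 hαβ hlam]

/-- the map (x,y) ↦ (α^q x − λβ^q y + δ, βx + λαy + ε) preserves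
L(x)^(q+1) + L(y)^(q+1) + c. -/
theorem stmt6 {k : Type*} [Field k] [IsAlgClosed k] (p q n : ℕ) (hp : p.Prime)
    [CharP k p] (hq : ∃ e : ℕ, 0 < e ∧ q = p ^ e)
    (A : ℕ → k) (hA0 : A 0 ≠ 0) (hA : ∀ i, A i ^ q ^ 2 = A i) (L : k → k)
    (hL : ∀ x : k, L x = (∑ i ∈ Finset.range n, A i * x ^ q ^ (2 * i)) + x ^ q ^ (2 * n))
    (c : k) (hc : c ≠ 0)
    (α β lam δ ε : k) (hα0 : α ≠ 0) (hβ0 : β ≠ 0)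
    (hα2 : α ^ q ^ 2 = α) (hβ2 : β ^ q ^ 2 = β)
    (hαβ : α ^ (q + 1) + β ^ (q + 1) = 1)
    (hlam : lam ^ (q + 1) = 1) (hlam2 : lam ^ q ^ 2 = lam)
    (hδ : L δ = 0) (hε : L ε = 0) :
    ∀ x y : k,
      L (α ^ q * x - lam * β ^ q * y + δ) ^ (q + 1) +
          L (β * x + lam * α * y + ε) ^ (q + 1) + c =
        L x ^ (q + 1) + L y ^ (q + 1) + c :=
  stmt6_general p q n hp hq A L hL c α β lam δ ε hα2 hβ2 hαβ hlam hlam2 hδ hε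
end

section
/- The set of roots in the algebraic closure of F_q of the polynomial P(T) = T^(q²) − β^(−(q²−1))·T − (x^(q^(2(n+1))) − x), viewed as a polynomial in T over F_{q^(2(n+1))}(x), is exactly { Σ_{i=0}^{n} β^(q^(2(i+1))−1) · x^(q^(2i)) + λ/β : λ ∈ F_{q²} }, where β ∈ F_{q^(2(n+1))}^* is fixed. -/
/-! With `Q = q²`, multiplying the equation by `β ^ Q` turns it, for `h = β g` and
`Y = β ^ Q X`, into `h ^ Q - h = Y ^ (Q ^ (n + 1)) - Y`; this uses `β ^ (Q ^ (n + 1)) = β`.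
Since Frobenius is additive, `∑ i ≤ n, Y ^ (Q ^ i)` is a solution (the sum telescopes), and two
solutions differ by a `d` with `d ^ Q = d`, which comparing degrees forces to be a constant
`λ ∈ 𝔽_Q`. -/

open Polynomial

section ExpChar

variable {R : Type*} [CommRing R] (p : ℕ) [ExpChar R p]

theorem sum_pow_pow_expChar_pow_sub_sum (y : R) (m N : ℕ) :
    (∑ i ∈ Finset.range N, y ^ (p ^ m) ^ i) ^ p ^ m - ∑ i ∈ Finset.range N, y ^ (p ^ m) ^ i =
      y ^ (p ^ m) ^ N - y := by
  rw [sum_pow_char_pow, ← Finset.sum_sub_distrib, Finset.sum_congr rfl fun i _ => by rw [← pow_mul, ← pow_succ]]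
  simpa using Finset.sum_range_sub (fun i => y ^ (p ^ m) ^ i) N

theorem Polynomial.pow_expChar_pow_sub_self_eq_iff [IsDomain R] {m : ℕ} (hQ : 1 < p ^ m)
    (f g : R[X]) :
    f ^ p ^ m - f = g ^ p ^ m - g ↔ ∃ c : R, c ^ p ^ m = c ∧ f = g + C c := by
  constructor
  · intro h
    have hfix : (f - g) ^ p ^ m = f - g := by
      rw [sub_pow_expChar_pow]; linear_combination h
    have hdeg : (f - g).natDegree = 0 := by
      have := congrArg natDegree hfix
      rw [natDegree_pow] at this
      nlinarith
    obtain ⟨c, hc⟩ := natDegree_eq_zero.mp hdeg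
    refine ⟨c, C_injective ?_, by rw [hc]; ring⟩
    rw [C_pow, hc, hfix]
  · rintro ⟨c, hc, rfl⟩
    rw [add_pow_expChar_pow, ← C_pow, hc]
    ring

end ExpChar

theorem Polynomial.pow_sub_C_inv_mul_sub_eq_zero_iff {K : Type*} [Field K] (p : ℕ) [ExpChar K p]
    {m : ℕ} (hQ : 1 < p ^ m) (n : ℕ) {β : K} (hβ0 : β ≠ 0) (hβ : β ^ (p ^ m) ^ (n + 1) = β)
    (g : K[X]) :
    g ^ p ^ m - C (β ^ (p ^ m - 1))⁻¹ * g - (X ^ (p ^ m) ^ (n + 1) - X) = 0 ↔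
      ∃ lam : K, lam ^ p ^ m = lam ∧
        g = ∑ i ∈ Finset.range (n + 1), C (β ^ ((p ^ m) ^ (i + 1) - 1)) * X ^ (p ^ m) ^ i +
          C (lam / β) := by
  set Q := p ^ m
  set S := ∑ i ∈ Finset.range (n + 1), C (β ^ (Q ^ (i + 1) - 1)) * X ^ Q ^ i
  set Y : K[X] := C (β ^ Q) * X
  have hCβ : (C β : K[X]) ≠ 0 := C_ne_zero.mpr hβ0
  have hβS : C β * S = ∑ i ∈ Finset.range (n + 1), Y ^ Q ^ i := by
    rw [Finset.mul_sum]
    refine Finset.sum_congr rfl fun i _ => ?_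
    have hβpow : β * β ^ (Q ^ (i + 1) - 1) = (β ^ Q) ^ Q ^ i := by
      rw [← pow_succ', Nat.sub_add_cancel (Nat.one_le_pow _ _ (by omega)), pow_succ', pow_mul]
    rw [mul_pow, ← C_pow, ← hβpow, C_mul]
    ring
  have hscale : C (β ^ Q) * (g ^ Q - C (β ^ (Q - 1))⁻¹ * g - (X ^ Q ^ (n + 1) - X)) =
      (C β * g) ^ Q - C β * g - (Y ^ Q ^ (n + 1) - Y) := by
    have h1 : C (β ^ Q) * C (β ^ (Q - 1))⁻¹ = C β := by
      rw [← C_mul, ← Nat.sub_add_cancel hQ.le, pow_succ, Nat.add_sub_cancel]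
      field_simp
    have h2 : (β ^ Q) ^ Q ^ (n + 1) = β ^ Q := by rw [← pow_mul, mul_comm, pow_mul, hβ]
    simp only [Y, mul_pow, ← C_pow, h2]
    linear_combination (-g) * h1
  rw [← mul_eq_zero_iff_left (C_ne_zero.mpr (pow_ne_zero Q hβ0)), hscale, sub_eq_zero,
    ← sum_pow_pow_expChar_pow_sub_sum p, ← hβS, pow_expChar_pow_sub_self_eq_iff p hQ]
  refine exists_congr fun c => and_congr_right fun _ => ?_
  rw [← mul_right_inj' hCβ (b := g), mul_add, ← C_mul, mul_div_cancel₀ c hβ0]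

theorem stmt9_general {k : Type*} [Field k] (p q n : ℕ) (hp : p.Prime)
    [CharP k p] (hq : ∃ e : ℕ, 0 < e ∧ q = p ^ e)
    (β : k) (hβ0 : β ≠ 0) (hβ : β ^ q ^ (2 * (n + 1)) = β) :
    ∀ g : Polynomial k,
      g ^ q ^ 2 - C (β ^ (q ^ 2 - 1))⁻¹ * g - (X ^ q ^ (2 * (n + 1)) - X) = 0 ↔
        ∃ lam : k, lam ^ q ^ 2 = lam ∧
          g = (∑ i ∈ Finset.range (n + 1),
                C (β ^ (q ^ (2 * (i + 1)) - 1)) * X ^ q ^ (2 * i)) + C (lam / β) := by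
  obtain ⟨e, he, rfl⟩ := hq
  have : Fact p.Prime := ⟨hp⟩
  have hq2 : (p ^ e) ^ 2 = p ^ (e * 2) := (pow_mul p e 2).symm
  simp only [pow_mul] at hβ ⊢
  rw [hq2] at hβ ⊢
  exact pow_sub_C_inv_mul_sub_eq_zero_iff p (Nat.one_lt_pow (by omega) hp.one_lt) n hβ0 hβ

/-- the set of roots of P(T) = T^(q²) − β^(−(q²−1)) T − (x^(q^(2(n+1))) − x)
is exactly { Σ_{i=0}^n β^(q^(2(i+1))−1) x^(q^(2i)) + λ/β : λ ∈ F_{q²} }. -/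
theorem stmt9 {k : Type*} [Field k] [IsAlgClosed k] (p q n : ℕ) (hp : p.Prime)
    [CharP k p] (hq : ∃ e : ℕ, 0 < e ∧ q = p ^ e) (hn : 1 ≤ n)
    (β : k) (hβ0 : β ≠ 0) (hβ : β ^ q ^ (2 * (n + 1)) = β) :
    ∀ g : Polynomial k,
      g ^ q ^ 2 - C (β ^ (q ^ 2 - 1))⁻¹ * g - (X ^ q ^ (2 * (n + 1)) - X) = 0 ↔
        ∃ lam : k, lam ^ q ^ 2 = lam ∧
          g = (∑ i ∈ Finset.range (n + 1),
                C (β ^ (q ^ (2 * (i + 1)) - 1)) * X ^ q ^ (2 * i)) + C (lam / β) :=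
  stmt9_general p q n hp hq β hβ0 hβ
end

section
/- Let q be a prime power, n ≥ 1, and L(x) = x + x^(q²) + ⋯ + x^(q^(2n)). The value set of the polynomial L(x)^(q+1) on F_{q^(2(n+1))} is F_q, which has q = ⌈q^(2(n+1))/(q^(2n)(q+1))⌉ elements; hence L(x)^(q+1) is a minimal value set polynomial over F_{q^(2(n+1))}. -/
/-!
Write `r = q²`. Since `|K| = r^(n+1)`, `L(a) = ∑ a^(r^i)` is the trace of `a` to the subfield of
order `r`, so `t = L(a)` satisfies `t^(q²) = t`, whence `(t^(q+1))^q = t^(q²) t^q = t^(q+1)`: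
every value of `L^(q+1)` is a root of `X^q - X`, so there are at most `q` values.
Conversely a polynomial of degree `d` takes at least `|K| / d` values, and
`|K| / deg L^(q+1) = q²/(q+1) > q - 1`.
-/

open Polynomial Finset

lemma sum_range_pow_pow_char_pow_eq_self {R : Type*} [CommSemiring R] (p : ℕ) [ExpChar R p]
    (k m : ℕ) {a : R} (ha : a ^ (p ^ k) ^ (m + 1) = a) :
    (∑ i ∈ range (m + 1), a ^ (p ^ k) ^ i) ^ p ^ k = ∑ i ∈ range (m + 1), a ^ (p ^ k) ^ i := by
  have hshift : ∀ i ∈ range (m + 1), (a ^ (p ^ k) ^ i) ^ p ^ k = a ^ (p ^ k) ^ (i + 1) :=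
    fun i _ => by rw [← pow_mul, ← pow_succ]
  rw [sum_pow_char_pow, sum_congr rfl hshift, sum_range_succ, ha, sum_range_succ' _ m,
    pow_zero, pow_one]

lemma pow_succ_pow_eq_self_of_pow_sq_eq_self {M : Type*} [CommMonoid M] {q : ℕ} {t : M}
    (ht : t ^ q ^ 2 = t) : (t ^ (q + 1)) ^ q = t ^ (q + 1) := by
  rw [← pow_mul, add_mul, one_mul, ← sq, pow_add, ht, ← pow_succ']

lemma card_image_le_of_pow_eq_self {α K : Type*} [Field K] [DecidableEq K] {q : ℕ} (hq : 1 < q)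
    (s : Finset α) {f : α → K} (hf : ∀ a ∈ s, f a ^ q = f a) : #(s.image f) ≤ q := by
  calc #(s.image f) ≤ (X ^ q - X : K[X]).natDegree := by
        refine card_le_degree_of_subset_roots fun v hv => ?_
        obtain ⟨a, ha, rfl⟩ := mem_image.1 hv
        rw [mem_roots (FiniteField.X_pow_card_sub_X_ne_zero K hq)]
        simp [hf a ha]
    _ = q := FiniteField.X_pow_card_sub_X_natDegree_eq K hq

lemma natDegree_sum_range_X_pow_pow {R : Type*} [Semiring R] [Nontrivial R] {r : ℕ} (hr : 1 < r)
    (m : ℕ) : (∑ i ∈ range (m + 1), (X : R[X]) ^ r ^ i).natDegree = r ^ m := by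
  rw [sum_range_succ, natDegree_add_eq_right_of_natDegree_lt] <;> rw [natDegree_X_pow]
  refine lt_of_le_of_lt (natDegree_sum_le_of_forall_le _ _ (n := r ^ m - 1) fun i hi => ?_) ?_
  · rw [natDegree_X_pow]
    have := Nat.pow_lt_pow_right hr (mem_range.1 hi)
    omega
  · have : 0 < r ^ m := by positivity
    omega

lemma eq_of_sq_le_succ_mul {q m : ℕ} (hsq : q ^ 2 ≤ (q + 1) * m) (hm : m ≤ q) : m = q := by
  by_contra hne
  have : m + 1 ≤ q := by omega
  nlinarith

lemma Nat.ceil_sq_div_add_one {α : Type*} [Field α] [LinearOrder α] [IsStrictOrderedRing α]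
    [FloorSemiring α] (q : ℕ) : ⌈(q : α) ^ 2 / (q + 1)⌉₊ = q := by
  rcases Nat.eq_zero_or_pos q with rfl | hq
  · simp
  have hq1 : (0 : α) < q + 1 := by positivity
  rw [Nat.ceil_eq_iff hq.ne', Nat.cast_sub hq, Nat.cast_one, lt_div_iff₀ hq1, div_le_iff₀ hq1]
  constructor <;> nlinarith

theorem stmt11_general {K : Type*} [Field K] [Fintype K] [DecidableEq K] (p q n : ℕ)
    (hp : p.Prime) [CharP K p] (hq : ∃ e : ℕ, 0 < e ∧ q = p ^ e)
    (hK : Fintype.card K = q ^ (2 * (n + 1))) :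
    (Finset.image
        (fun a : K => (∑ i ∈ Finset.range (n + 1), a ^ q ^ (2 * i)) ^ (q + 1))
        Finset.univ).card = q ∧
    q = ⌈(q ^ (2 * (n + 1)) : ℚ) / ((q : ℚ) ^ (2 * n) * ((q : ℚ) + 1))⌉₊ := by
  obtain ⟨e, he, hqe⟩ := hq
  have : ExpChar K p := ExpChar.prime hp
  have hq1 : 1 < q := hqe ▸ Nat.one_lt_pow he.ne' hp.one_lt
  simp only [pow_mul] at hK ⊢
  have hfix : ∀ a : K, (∑ i ∈ range (n + 1), a ^ (q ^ 2) ^ i) ^ q ^ 2 =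
      ∑ i ∈ range (n + 1), a ^ (q ^ 2) ^ i := fun a => by
    have hpow : a ^ (q ^ 2) ^ (n + 1) = a := by rw [← hK, FiniteField.pow_card]
    rw [hqe, ← pow_mul p e 2] at hpow ⊢
    exact sum_range_pow_pow_char_pow_eq_self p (e * 2) n hpow
  have hupper : #(univ.image fun a : K => (∑ i ∈ range (n + 1), a ^ (q ^ 2) ^ i) ^ (q + 1)) ≤ q :=
    card_image_le_of_pow_eq_self hq1 univ fun a _ => pow_succ_pow_eq_self_of_pow_sq_eq_self (hfix a)
  set L : K[X] := ∑ i ∈ range (n + 1), X ^ (q ^ 2) ^ i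
  have hdeg : (L ^ (q + 1)).natDegree = (q ^ 2) ^ n * (q + 1) := by
    rw [natDegree_pow, natDegree_sum_range_X_pow_pow (Nat.one_lt_pow two_ne_zero hq1), mul_comm]
  have hlower := FiniteField.card_image_polynomial_eval (R := K) (p := L ^ (q + 1)) <| by
    rw [← natDegree_pos_iff_degree_pos, hdeg]
    positivity
  simp only [hK, hdeg, pow_succ _ n, L, eval_pow, eval_finsetSum, eval_X, mul_assoc] at hlower
  refine ⟨eq_of_sq_le_succ_mul (Nat.le_of_mul_le_mul_left hlower (by positivity)) hupper, ?_⟩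
  rw [pow_succ, mul_div_mul_left _ _ (by positivity), Nat.ceil_sq_div_add_one]

/-- the value set of L(x)^(q+1) on F_{q^(2(n+1))} has exactly
q = ⌈q^(2(n+1)) / (q^(2n)(q+1))⌉ elements, i.e. L(x)^(q+1) is a minimal value
set polynomial. -/
theorem stmt11 {K : Type*} [Field K] [Fintype K] [DecidableEq K] (p q n : ℕ)
    (hp : p.Prime) [CharP K p] (hq : ∃ e : ℕ, 0 < e ∧ q = p ^ e) (hn : 1 ≤ n)
    (hK : Fintype.card K = q ^ (2 * (n + 1))) :
    (Finset.image
        (fun a : K => (∑ i ∈ Finset.range (n + 1), a ^ q ^ (2 * i)) ^ (q + 1))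
        Finset.univ).card = q ∧
    q = ⌈(q ^ (2 * (n + 1)) : ℚ) / ((q : ℚ) ^ (2 * n) * ((q : ℚ) + 1))⌉₊ :=
  stmt11_general p q n hp hq hK
end

section
/- Let q be a prime power and n ≥ 1. Then the genus g = q^(2n)(q+1)(q^(2n+1)−2)/2 + 1 and the order N = q^(4n+1)(q²−1)(q+1) satisfy N ≥ g^((2n+2)/(2n+1)). -/
/-!
Write `a = q ≥ 2` and `m = 2n + 1`. Then `N = C · M` with `C = (a + 1) a^(2m-1) / 2` and
`M = 2(a² - 1)`, the genus satisfies `g ≤ C`, and `C ≤ M^m` because `2(a - 1) ≥ a` and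
`a + 1 ≥ a`.
Hence `g^((m+1)/m) = g · g^(1/m) ≤ C · C^(1/m) ≤ C · M = N`.
-/

open Real

theorem rpow_succ_div_le_mul {g C M : ℝ} {m : ℕ} (hm : m ≠ 0) (hg : 0 ≤ g) (hM : 0 ≤ M)
    (hgC : g ≤ C) (hCM : C ≤ M ^ m) : g ^ (((m : ℝ) + 1) / m) ≤ C * M := by
  have hm' : (m : ℝ) ≠ 0 := Nat.cast_ne_zero.mpr hm
  have hroot : g ^ (m : ℝ)⁻¹ ≤ M :=
    calc g ^ (m : ℝ)⁻¹ ≤ (M ^ m) ^ (m : ℝ)⁻¹ :=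
          rpow_le_rpow hg (hgC.trans hCM) (by positivity)
      _ = M := pow_rpow_inv_natCast hM hm
  calc g ^ (((m : ℝ) + 1) / m) = g * g ^ (m : ℝ)⁻¹ := by
        rw [add_div, div_self hm', one_div, rpow_add' hg (by positivity), rpow_one]
    _ ≤ C * M := mul_le_mul hgC hroot (by positivity) (hg.trans hgC)

theorem pow_mul_succ_sub_two_div_two_add_one_le {a : ℝ} (ha : 1 ≤ a) (n : ℕ) :
    a ^ (2 * n) * (a + 1) * (a ^ (2 * n + 1) - 2) / 2 + 1 ≤ (a + 1) * a ^ (4 * n + 1) / 2 := by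
  have hsplit : a ^ (4 * n + 1) = a ^ (2 * n) * a ^ (2 * n + 1) := by
    rw [← pow_add]; ring_nf
  have hone : 1 ≤ a ^ (2 * n) * (a + 1) := by
    nlinarith [one_le_pow₀ (n := 2 * n) ha]
  rw [hsplit]
  nlinarith

theorem succ_mul_pow_div_two_le_pow {a : ℝ} (ha : 2 ≤ a) (k : ℕ) :
    (a + 1) * a ^ (2 * k + 1) / 2 ≤ (2 * (a ^ 2 - 1)) ^ (k + 1) := by
  have ha0 : 0 ≤ a := by linarith
  calc (a + 1) * a ^ (2 * k + 1) / 2 ≤ (a + 1) * a ^ (2 * k + 1) := by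
        linarith [show 0 ≤ (a + 1) * a ^ (2 * k + 1) by positivity]
    _ = a ^ (k + 1) * a ^ k * (a + 1) := by ring
    _ ≤ (2 * (a - 1)) ^ (k + 1) * (a + 1) ^ k * (a + 1) := by
        have h2 : 0 ≤ 2 * (a - 1) := by linarith
        gcongr <;> linarith
    _ = (2 * (a ^ 2 - 1)) ^ (k + 1) := by
        rw [mul_assoc, ← pow_succ, ← mul_pow]; ring

theorem zero_le_pow_mul_succ_sub_two_div_two_add_one {a : ℝ} (ha : 2 ≤ a) (n : ℕ) :
    0 ≤ a ^ (2 * n) * (a + 1) * (a ^ (2 * n + 1) - 2) / 2 + 1 := by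
  have hpow : 2 ≤ a ^ (2 * n + 1) := ha.trans (le_self_pow₀ (by linarith) (by omega))
  have : 0 ≤ a ^ (2 * n) * (a + 1) * (a ^ (2 * n + 1) - 2) :=
    mul_nonneg (by positivity) (by linarith)
  linarith

theorem stmt12_general (q n : ℕ) (hq : IsPrimePow q) :
    (q : ℝ) ^ (4 * n + 1) * ((q : ℝ) ^ 2 - 1) * ((q : ℝ) + 1) ≥
      ((q : ℝ) ^ (2 * n) * ((q : ℝ) + 1) * ((q : ℝ) ^ (2 * n + 1) - 2) / 2 + 1) ^
        ((2 * (n : ℝ) + 2) / (2 * (n : ℝ) + 1)) := by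
  have hq2 : (2 : ℝ) ≤ q := by exact_mod_cast hq.two_le
  have hbound : ((q : ℝ) + 1) * (q : ℝ) ^ (4 * n + 1) / 2 ≤
      (2 * ((q : ℝ) ^ 2 - 1)) ^ (2 * n + 1) := by
    have := succ_mul_pow_div_two_le_pow hq2 (2 * n)
    rwa [show 2 * (2 * n) + 1 = 4 * n + 1 by ring] at this
  have key := rpow_succ_div_le_mul (m := 2 * n + 1) (by omega)
    (zero_le_pow_mul_succ_sub_two_div_two_add_one hq2 n) (by nlinarith)
    (pow_mul_succ_sub_two_div_two_add_one_le (by linarith) n) hbound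
  push_cast at key
  rw [ge_iff_le, show 2 * (n : ℝ) + 2 = 2 * n + 1 + 1 by ring]
  linarith

/-- with g = q^(2n)(q+1)(q^(2n+1)−2)/2 + 1 and
N = q^(4n+1)(q²−1)(q+1), one has N ≥ g^((2n+2)/(2n+1)). -/
theorem stmt12 (q n : ℕ) (hq : IsPrimePow q) (hn : 1 ≤ n) :
    (q : ℝ) ^ (4 * n + 1) * ((q : ℝ) ^ 2 - 1) * ((q : ℝ) + 1) ≥
      ((q : ℝ) ^ (2 * n) * ((q : ℝ) + 1) * ((q : ℝ) ^ (2 * n + 1) - 2) / 2 + 1) ^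
        ((2 * (n : ℝ) + 2) / (2 * (n : ℝ) + 1)) :=
  stmt12_general q n hq
end
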